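/- In the Bergman space A² = 𝒟_{−1} (weights ω_k = 1/(k+1)), there exists a nonzero function f with f(0) ≠ 0 and an n such that the n-th optimal polynomial approximant of 1/f has a zero strictly inside the open unit disk; in fact the minimal modulus of such a zero over all f and n equals 2√2/3, attained by f(z) = (1 − z/√2)^{−3}. -/

import Mathlib

open scoped BigOperators
open Polynomial Filter

noncomputable section

/-- Coefficient sequence of the product p·f, where f is an analytic function on the disk
given by its Taylor coefficient sequence. -/
def polyMulSeq (p : Polynomial ℂ) (f : ℕ → ℂ) : ℕ → ℂ :=
  fun n => ∑ j ∈ Finset.range (n + 1), p.coeff j * f (n - j)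

/-- The constant function 1 as a Taylor coefficient sequence. -/
def oneSeq : ℕ → ℂ := fun n => if n = 0 then 1 else 0

/-- Membership in the weighted Hardy space H²_ω. -/
def MemHw (ω : ℕ → ℝ) (f : ℕ → ℂ) : Prop :=
  Summable (fun k => ‖f k‖ ^ 2 * ω k)

/-- Squared weighted norm ‖f‖²_ω. -/
def wNormSq (ω : ℕ → ℝ) (f : ℕ → ℂ) : ℝ := ∑' k, ‖f k‖ ^ 2 * ω k

/-- Weighted inner product ⟨f,g⟩_ω. -/
def wInner (ω : ℕ → ℝ) (f g : ℕ → ℂ) : ℂ :=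
  ∑' k, f k * (starRingEnd ℂ) (g k) * (ω k : ℂ)

/-- `q` is the n-th optimal polynomial approximant of 1/f in H²_ω. -/
def IsOPA (ω : ℕ → ℝ) (f : ℕ → ℂ) (n : ℕ) (q : Polynomial ℂ) : Prop :=
  q.natDegree ≤ n ∧
  ∀ p : Polynomial ℂ, p.natDegree ≤ n →
    wNormSq ω (polyMulSeq q f - oneSeq) ≤ wNormSq ω (polyMulSeq p f - oneSeq)

/-!
If `q = (X - z) p` is the `n`-th optimal approximant of `1/f`, then `q f - 1` is orthogonal to
`X p f`; with `h = p f` and `S` the forward shift this reads `‖S h‖² = z̄ ⟨S h, h⟩`. For the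
Bergman weight, a weighted AM–GM inequality gives
`|⟨S h, h⟩| ≤ ∑ |h k| |h (k+1)| / (k+2) ≤ (3√2/4) ∑ |h k|² / (k+2) = (3√2/4) ‖S h‖²`,
so `|z| ≥ 2√2/3`. For `f = (1 - z/√2)⁻³` the first optimal approximant is a multiple of
`X - 2√2/3`, as its normal equations show.
-/

def shiftSeq {M : Type*} [Zero M] (u : ℕ → M) : ℕ → M
  | 0 => 0
  | k + 1 => u k

@[simp] lemma shiftSeq_zero {M : Type*} [Zero M] (u : ℕ → M) : shiftSeq u 0 = 0 := rfl

@[simp] lemma shiftSeq_succ {M : Type*} [Zero M] (u : ℕ → M) (k : ℕ) :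
    shiftSeq u (k + 1) = u k := rfl

lemma tsum_add_one_eq_tsum {M : Type*} [AddCommMonoid M] [TopologicalSpace M] {g : ℕ → M}
    (h0 : g 0 = 0) : ∑' k, g (k + 1) = ∑' k, g k :=
  (add_left_injective 1).tsum_eq fun k hk =>
    ⟨k - 1, Nat.sub_add_cancel (Nat.pos_of_ne_zero fun hk0 => hk (hk0 ▸ h0))⟩

section PolyMulSeq

variable (f : ℕ → ℂ)

lemma polyMulSeq_add (p q : ℂ[X]) : polyMulSeq (p + q) f = polyMulSeq p f + polyMulSeq q f := by
  funext n
  simp [polyMulSeq, add_mul, Finset.sum_add_distrib]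

lemma polyMulSeq_sub (p q : ℂ[X]) : polyMulSeq (p - q) f = polyMulSeq p f - polyMulSeq q f := by
  funext n
  simp [polyMulSeq, sub_mul, Finset.sum_sub_distrib]

lemma polyMulSeq_C_mul (a : ℂ) (p : ℂ[X]) : polyMulSeq (C a * p) f = a • polyMulSeq p f := by
  funext n
  simp [polyMulSeq, coeff_C_mul, Finset.mul_sum, mul_assoc]

lemma polyMulSeq_one : polyMulSeq 1 f = f := by
  funext n
  simp [polyMulSeq, coeff_one, ite_mul]

lemma polyMulSeq_zero : polyMulSeq 0 f = 0 := by
  funext n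
  simp [polyMulSeq]

lemma polyMulSeq_C (a : ℂ) : polyMulSeq (C a) f = a • f := by
  simpa [polyMulSeq_one] using polyMulSeq_C_mul f a 1

lemma polyMulSeq_X_mul (p : ℂ[X]) : polyMulSeq (X * p) f = shiftSeq (polyMulSeq p f) := by
  funext n
  cases n with
  | zero => simp [polyMulSeq]
  | succ m =>
    rw [shiftSeq_succ, polyMulSeq, Finset.sum_range_succ']
    simp [coeff_X_mul, polyMulSeq]

lemma polyMulSeq_X : polyMulSeq X f = shiftSeq f := by
  simpa [polyMulSeq_one] using polyMulSeq_X_mul f 1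

lemma polyMulSeq_natTrailingDegree (p : ℂ[X]) :
    polyMulSeq p f p.natTrailingDegree = p.trailingCoeff * f 0 := by
  rw [polyMulSeq, Finset.sum_eq_single_of_mem _ (Finset.self_mem_range_succ _)]
  · simp [trailingCoeff]
  · intro j hj hjne
    have hlt : j < p.natTrailingDegree :=
      lt_of_le_of_ne (Nat.lt_succ_iff.mp (Finset.mem_range.mp hj)) hjne
    rw [coeff_eq_zero_of_lt_natTrailingDegree hlt, zero_mul]

end PolyMulSeq

section WeightedSpace

variable {ω : ℕ → ℝ}

lemma memHw_add (hω : ∀ k, 0 ≤ ω k) {u v : ℕ → ℂ} (hu : MemHw ω u) (hv : MemHw ω v) :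
    MemHw ω (u + v) := by
  refine Summable.of_nonneg_of_le (fun k => mul_nonneg (sq_nonneg _) (hω k)) (fun k => ?_)
    ((hu.add hv).mul_left 2)
  calc ‖u k + v k‖ ^ 2 * ω k ≤ (‖u k‖ + ‖v k‖) ^ 2 * ω k := by
        gcongr
        · exact hω k
        · exact norm_add_le _ _
    _ ≤ 2 * (‖u k‖ ^ 2 + ‖v k‖ ^ 2) * ω k := by gcongr; exacts [hω k, add_sq_le]
    _ = 2 * (‖u k‖ ^ 2 * ω k + ‖v k‖ ^ 2 * ω k) := by ring

lemma memHw_smul (a : ℂ) {v : ℕ → ℂ} (hv : MemHw ω v) : MemHw ω (a • v) :=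
  (hv.mul_left (‖a‖ ^ 2)).congr fun k => by
    simp only [Pi.smul_apply, smul_eq_mul, norm_mul, mul_pow]
    ring

lemma memHw_sub (hω : ∀ k, 0 ≤ ω k) {u v : ℕ → ℂ} (hu : MemHw ω u) (hv : MemHw ω v) :
    MemHw ω (u - v) := by
  simpa [sub_eq_add_neg] using memHw_add hω hu (memHw_smul (-1) hv)

lemma memHw_oneSeq : MemHw ω oneSeq :=
  summable_of_ne_finset_zero (s := {0}) fun k hk => by
    simp [oneSeq, Finset.mem_singleton.not.mp hk]

lemma memHw_shiftSeq (hω : ∀ k, 0 ≤ ω k) (hanti : Antitone ω) {u : ℕ → ℂ} (hu : MemHw ω u) :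
    MemHw ω (shiftSeq u) := by
  refine (summable_nat_add_iff 1).mp ?_
  refine Summable.of_nonneg_of_le (fun k => ?_) (fun k => ?_) hu
  · exact mul_nonneg (sq_nonneg _) (hω _)
  · exact mul_le_mul_of_nonneg_left (hanti (Nat.le_succ k)) (sq_nonneg _)

lemma memHw_polyMulSeq (hω : ∀ k, 0 ≤ ω k) (hanti : Antitone ω) (p : ℂ[X]) {f : ℕ → ℂ}
    (hf : MemHw ω f) : MemHw ω (polyMulSeq p f) := by
  induction p using Polynomial.induction_on with
  | C a => rw [polyMulSeq_C]; exact memHw_smul a hf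
  | add p q hp hq => rw [polyMulSeq_add]; exact memHw_add hω hp hq
  | monomial n a ih =>
    rw [show C a * X ^ (n + 1) = X * (C a * X ^ n) by ring, polyMulSeq_X_mul]
    exact memHw_shiftSeq hω hanti ih

end WeightedSpace

section WeightedInner

variable {ω : ℕ → ℝ}

lemma summable_norm_mul_norm_mul (hω : ∀ k, 0 ≤ ω k) {u v : ℕ → ℂ} (hu : MemHw ω u)
    (hv : MemHw ω v) : Summable fun k => ‖u k‖ * ‖v k‖ * ω k := by
  refine Summable.of_nonneg_of_le (fun k => mul_nonneg (by positivity) (hω k)) (fun k => ?_)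
    ((hu.add hv).mul_left (1 / 2))
  have h := two_mul_le_add_sq ‖u k‖ ‖v k‖
  nlinarith [hω k]

lemma norm_wInner_term (hω : ∀ k, 0 ≤ ω k) (u v : ℕ → ℂ) (k : ℕ) :
    ‖u k * starRingEnd ℂ (v k) * (ω k : ℂ)‖ = ‖u k‖ * ‖v k‖ * ω k := by
  rw [norm_mul, norm_mul, RCLike.norm_conj, Complex.norm_real, Real.norm_of_nonneg (hω k)]

lemma summable_wInner (hω : ∀ k, 0 ≤ ω k) {u v : ℕ → ℂ} (hu : MemHw ω u) (hv : MemHw ω v) :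
    Summable fun k => u k * starRingEnd ℂ (v k) * (ω k : ℂ) :=
  Summable.of_norm <| (summable_norm_mul_norm_mul hω hu hv).congr fun k =>
    (norm_wInner_term hω u v k).symm

lemma norm_wInner_le (hω : ∀ k, 0 ≤ ω k) {u v : ℕ → ℂ} (hu : MemHw ω u) (hv : MemHw ω v) :
    ‖wInner ω u v‖ ≤ ∑' k, ‖u k‖ * ‖v k‖ * ω k := by
  simp_rw [wInner, ← norm_wInner_term hω]
  exact norm_tsum_le_tsum_norm <| (summable_norm_mul_norm_mul hω hu hv).congr fun k =>
    (norm_wInner_term hω u v k).symm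

lemma wInner_self (u : ℕ → ℂ) : wInner ω u u = (wNormSq ω u : ℂ) := by
  rw [wNormSq, wInner, Complex.ofReal_tsum]
  refine tsum_congr fun k => ?_
  rw [Complex.mul_conj, Complex.normSq_eq_norm_sq]
  push_cast
  ring

lemma wInner_smul_left (a : ℂ) (u v : ℕ → ℂ) : wInner ω (a • u) v = a * wInner ω u v := by
  rw [wInner, wInner, ← tsum_mul_left]
  exact tsum_congr fun k => by simp only [Pi.smul_apply, smul_eq_mul]; ring

lemma wInner_smul_right (a : ℂ) (u v : ℕ → ℂ) :
    wInner ω u (a • v) = starRingEnd ℂ a * wInner ω u v := by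
  rw [wInner, wInner, ← tsum_mul_left]
  exact tsum_congr fun k => by simp only [Pi.smul_apply, smul_eq_mul, map_mul]; ring

lemma wInner_add_left (hω : ∀ k, 0 ≤ ω k) {u₁ u₂ v : ℕ → ℂ} (h₁ : MemHw ω u₁)
    (h₂ : MemHw ω u₂) (hv : MemHw ω v) :
    wInner ω (u₁ + u₂) v = wInner ω u₁ v + wInner ω u₂ v := by
  rw [wInner, wInner, wInner,
    ← (summable_wInner hω h₁ hv).tsum_add (summable_wInner hω h₂ hv)]
  exact tsum_congr fun k => by simp only [Pi.add_apply]; ring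

lemma wInner_sub_right (hω : ∀ k, 0 ≤ ω k) {u v₁ v₂ : ℕ → ℂ} (hu : MemHw ω u)
    (h₁ : MemHw ω v₁) (h₂ : MemHw ω v₂) :
    wInner ω u (v₁ - v₂) = wInner ω u v₁ - wInner ω u v₂ := by
  rw [wInner, wInner, wInner,
    ← (summable_wInner hω hu h₁).tsum_sub (summable_wInner hω hu h₂)]
  exact tsum_congr fun k => by simp only [Pi.sub_apply, map_sub]; ring

lemma wInner_oneSeq (v : ℕ → ℂ) : wInner ω v oneSeq = v 0 * ω 0 := by
  rw [wInner, tsum_eq_single 0 fun k hk => by simp [oneSeq, hk]]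
  simp [oneSeq]

lemma wNormSq_nonneg (hω : ∀ k, 0 ≤ ω k) (u : ℕ → ℂ) : 0 ≤ wNormSq ω u :=
  tsum_nonneg fun k => mul_nonneg (sq_nonneg _) (hω k)

lemma wNormSq_pos (hω : ∀ k, 0 < ω k) {u : ℕ → ℂ} (hu : MemHw ω u) {k : ℕ} (hk : u k ≠ 0) :
    0 < wNormSq ω u :=
  hu.tsum_pos (fun j => mul_nonneg (sq_nonneg _) (hω j).le) k
    (mul_pos (pow_pos (norm_pos_iff.mpr hk) 2) (hω k))

lemma wNormSq_add_smul (hω : ∀ k, 0 ≤ ω k) {u v : ℕ → ℂ} (hu : MemHw ω u) (hv : MemHw ω v)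
    (t : ℂ) :
    wNormSq ω (u + t • v) = wNormSq ω u + 2 * (t * wInner ω v u).re + ‖t‖ ^ 2 * wNormSq ω v := by
  have hvu := (summable_wInner hω hv hu).mul_left t
  have hcross : Summable fun k => 2 * (t * (v k * starRingEnd ℂ (u k) * (ω k : ℂ))).re :=
    (hvu.mapL Complex.reCLM).mul_left 2
  have hterm : ∀ k, ‖(u + t • v) k‖ ^ 2 * ω k = ‖u k‖ ^ 2 * ω k
      + 2 * (t * (v k * starRingEnd ℂ (u k) * (ω k : ℂ))).re + ‖t‖ ^ 2 * (‖v k‖ ^ 2 * ω k) := by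
    intro k
    simp only [Pi.add_apply, Pi.smul_apply, smul_eq_mul, Complex.sq_norm, Complex.normSq_apply,
      Complex.add_re, Complex.add_im, Complex.mul_re, Complex.mul_im, Complex.conj_re,
      Complex.conj_im, Complex.ofReal_re, Complex.ofReal_im]
    ring
  rw [wNormSq, tsum_congr hterm, (hu.add hcross).tsum_add (hv.mul_left _), hu.tsum_add hcross,
    tsum_mul_left, tsum_mul_left, ← Complex.re_tsum hvu, tsum_mul_left, wInner, wNormSq, wNormSq]

lemma wInner_eq_zero_of_forall_le (hω : ∀ k, 0 ≤ ω k) {u v : ℕ → ℂ} (hu : MemHw ω u)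
    (hv : MemHw ω v) (hmin : ∀ t : ℂ, wNormSq ω u ≤ wNormSq ω (u + t • v)) :
    wInner ω v u = 0 := by
  by_contra hI
  set I := wInner ω v u
  have hNv := wNormSq_nonneg hω v
  set s : ℝ := (wNormSq ω v + 1)⁻¹
  have hs : 0 < s := by positivity
  have hsN : s * wNormSq ω v < 1 := by
    rw [inv_mul_lt_one₀ (by positivity)]
    linarith
  have hSpos : 0 < Complex.normSq I := Complex.normSq_pos.mpr hI
  -- the direction `-s • conj I` decreases the norm to first order
  have h := hmin (-(s : ℂ) * starRingEnd ℂ I)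
  have hre : (-(s : ℂ) * starRingEnd ℂ I * I).re = -(s * Complex.normSq I) := by
    rw [mul_assoc, mul_comm (starRingEnd ℂ I), Complex.mul_conj]
    norm_cast
    ring
  have hnorm : ‖-(s : ℂ) * starRingEnd ℂ I‖ ^ 2 = s ^ 2 * Complex.normSq I := by
    rw [norm_mul, norm_neg, Complex.norm_real, RCLike.norm_conj, Real.norm_of_nonneg hs.le,
      mul_pow, Complex.sq_norm]
  rw [wNormSq_add_smul hω hu hv, hre, hnorm] at h
  nlinarith [mul_pos hs hSpos]

variable (hω : ∀ k, 0 ≤ ω k) (hanti : Antitone ω) {f : ℕ → ℂ} (hf : MemHw ω f) {n : ℕ}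
  {q : ℂ[X]}
include hω hanti hf

lemma IsOPA.wInner_eq_zero (hq : IsOPA ω f n q) {r : ℂ[X]} (hr : r.natDegree ≤ n) :
    wInner ω (polyMulSeq r f) (polyMulSeq q f - oneSeq) = 0 := by
  refine wInner_eq_zero_of_forall_le hω
    (memHw_sub hω (memHw_polyMulSeq hω hanti q hf) memHw_oneSeq)
    (memHw_polyMulSeq hω hanti r hf) fun t => ?_
  have hcomb : polyMulSeq q f - oneSeq + t • polyMulSeq r f
      = polyMulSeq (q + C t * r) f - oneSeq := by
    rw [polyMulSeq_add, polyMulSeq_C_mul]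
    abel
  rw [hcomb]
  exact hq.2 _ <| (natDegree_add_le _ _).trans
    (max_le hq.1 ((natDegree_C_mul_le t r).trans hr))

lemma isOPA_of_wInner_eq_zero (hdeg : q.natDegree ≤ n)
    (horth : ∀ r : ℂ[X], r.natDegree ≤ n →
      wInner ω (polyMulSeq r f) (polyMulSeq q f - oneSeq) = 0) :
    IsOPA ω f n q := by
  refine ⟨hdeg, fun p hp => ?_⟩
  have hdecomp : polyMulSeq p f - oneSeq
      = polyMulSeq q f - oneSeq + (1 : ℂ) • polyMulSeq (p - q) f := by
    rw [polyMulSeq_sub, one_smul]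
    abel
  rw [hdecomp, wNormSq_add_smul hω (memHw_sub hω (memHw_polyMulSeq hω hanti q hf) memHw_oneSeq)
      (memHw_polyMulSeq hω hanti _ hf),
    horth _ ((natDegree_sub_le p q).trans (max_le hp hdeg))]
  simp only [mul_zero, Complex.zero_re, norm_one, one_pow, one_mul, add_zero]
  linarith [wNormSq_nonneg hω (polyMulSeq (p - q) f)]

end WeightedInner

section LowerBound

variable {ω : ℕ → ℝ} (hω : ∀ k, 0 < ω k) (hanti : Antitone ω) {f : ℕ → ℂ} (hf : MemHw ω f)
  {n : ℕ} {q : ℂ[X]}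
include hω hanti hf

lemma IsOPA.ne_zero (hq : IsOPA ω f n q) (hf0 : f 0 ≠ 0) : q ≠ 0 := by
  rintro rfl
  have h := hq.wInner_eq_zero (fun k => (hω k).le) hanti hf (r := 1) (by simp)
  rw [polyMulSeq_one, polyMulSeq_zero, zero_sub, ← neg_one_smul ℂ oneSeq, wInner_smul_right,
    wInner_oneSeq] at h
  simp [hf0, (hω 0).ne'] at h

/-- The Euler–Lagrange equation of the extremal problem, tested against `X * p`. -/
lemma IsOPA.wNormSq_shiftSeq_eq (hq : IsOPA ω f n q) {z : ℂ} {p : ℂ[X]} (hp : p ≠ 0)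
    (hqp : q = (X - C z) * p) :
    (wNormSq ω (shiftSeq (polyMulSeq p f)) : ℂ)
      = starRingEnd ℂ z * wInner ω (shiftSeq (polyMulSeq p f)) (polyMulSeq p f) := by
  have hω' : ∀ k, 0 ≤ ω k := fun k => (hω k).le
  set h := polyMulSeq p f
  have hh : MemHw ω h := memHw_polyMulSeq hω' hanti p hf
  have hSh : MemHw ω (shiftSeq h) := memHw_shiftSeq hω' hanti hh
  have hdeg : (X * p).natDegree ≤ n := by
    rw [natDegree_X_mul hp, add_comm, ← natDegree_X_sub_C z,
      ← natDegree_mul (X_sub_C_ne_zero z) hp, ← hqp]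
    exact hq.1
  have hqf : polyMulSeq q f = shiftSeq h - z • h := by
    rw [hqp, sub_mul, polyMulSeq_sub, polyMulSeq_X_mul, polyMulSeq_C_mul]
  have horth := hq.wInner_eq_zero hω' hanti hf hdeg
  rw [polyMulSeq_X_mul, hqf,
    wInner_sub_right hω' hSh (memHw_sub hω' hSh (memHw_smul z hh)) memHw_oneSeq,
    wInner_sub_right hω' hSh hSh (memHw_smul z hh), wInner_oneSeq, shiftSeq_zero,
    wInner_smul_right, wInner_self] at horth
  linear_combination horth

theorem one_le_norm_mul_of_isOPA_eval_eq_zero {M : ℝ}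
    (hM : ∀ F : ℕ → ℝ, Summable (fun k => F k ^ 2 * ω (k + 1)) →
      Summable (fun k => F k * F (k + 1) * ω (k + 1)) →
      ∑' k, F k * F (k + 1) * ω (k + 1) ≤ M * ∑' k, F k ^ 2 * ω (k + 1))
    (hq : IsOPA ω f n q) (hf0 : f 0 ≠ 0) {z : ℂ} (hz : q.eval z = 0) : 1 ≤ ‖z‖ * M := by
  have hω' : ∀ k, 0 ≤ ω k := fun k => (hω k).le
  obtain ⟨p, hqp⟩ := dvd_iff_isRoot.mpr hz
  have hp : p ≠ 0 := by
    rintro rfl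
    exact hq.ne_zero hω hanti hf hf0 (by simpa using hqp)
  set h := polyMulSeq p f
  have hh : MemHw ω h := memHw_polyMulSeq hω' hanti p hf
  have hSh : MemHw ω (shiftSeq h) := memHw_shiftSeq hω' hanti hh
  have hN : wNormSq ω (shiftSeq h) = ∑' k, ‖h k‖ ^ 2 * ω (k + 1) := by
    rw [wNormSq, ← tsum_add_one_eq_tsum (by simp)]
    rfl
  have hNpos : 0 < wNormSq ω (shiftSeq h) :=
    wNormSq_pos hω hSh (k := p.natTrailingDegree + 1)
      (by simp [h, polyMulSeq_natTrailingDegree, hp, hf0])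
  have hinner : ‖wInner ω (shiftSeq h) h‖ ≤ ∑' k, ‖h k‖ * ‖h (k + 1)‖ * ω (k + 1) := by
    refine (norm_wInner_le hω' hSh hh).trans_eq ?_
    rw [← tsum_add_one_eq_tsum (by simp)]
    rfl
  have hbound := hM (fun k => ‖h k‖) ((summable_nat_add_iff 1).mpr hSh)
    ((summable_nat_add_iff 1).mpr (summable_norm_mul_norm_mul hω' hSh hh))
  refine le_of_mul_le_mul_right ?_ hNpos
  calc 1 * wNormSq ω (shiftSeq h) = ‖z‖ * ‖wInner ω (shiftSeq h) h‖ := by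
        rw [one_mul, ← Complex.norm_of_nonneg (wNormSq_nonneg hω' _),
          hq.wNormSq_shiftSeq_eq hω hanti hf hp hqp, norm_mul, RCLike.norm_conj]
    _ ≤ ‖z‖ * (M * wNormSq ω (shiftSeq h)) := by
        rw [hN]
        exact mul_le_mul_of_nonneg_left (hinner.trans hbound) (norm_nonneg z)
    _ = ‖z‖ * M * wNormSq ω (shiftSeq h) := by ring

end LowerBound

lemma mul_mul_le_add_of_sq_le {a c w : ℝ} (ha : 0 ≤ a) (hc : 0 ≤ c) (hw : w ^ 2 ≤ 4 * a * c)
    (x y : ℝ) : x * y * w ≤ a * x ^ 2 + c * y ^ 2 := by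
  rcases ha.eq_or_lt with rfl | ha
  · obtain rfl : w = 0 := by simpa using hw
    nlinarith [sq_nonneg y]
  · nlinarith [sq_nonneg (2 * a * x - w * y), sq_nonneg y]

lemma tsum_mul_succ_le_of_sq_le {F w a c : ℕ → ℝ} {M : ℝ} (ha : ∀ k, 0 ≤ a k)
    (hc : ∀ k, 0 ≤ c k) (hc0 : c 0 = 0) (hw : ∀ k, w k ^ 2 ≤ 4 * a k * c (k + 1))
    (hac : ∀ k, a k + c k ≤ M * w k) (hs : Summable fun k => F k ^ 2 * w k)
    (hs' : Summable fun k => F k * F (k + 1) * w k) :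
    ∑' k, F k * F (k + 1) * w k ≤ M * ∑' k, F k ^ 2 * w k := by
  have hdom : ∀ {b : ℕ → ℝ}, (∀ k, 0 ≤ b k) → (∀ k, b k ≤ M * w k) →
      Summable fun k => b k * F k ^ 2 := fun hb hbM =>
    Summable.of_nonneg_of_le (fun k => mul_nonneg (hb k) (sq_nonneg _))
      (fun k => by nlinarith [hbM k, sq_nonneg (F k)]) (hs.mul_left M)
  have hsa := hdom ha fun k => by linarith [hac k, hc k]
  have hsc := hdom hc fun k => by linarith [hac k, ha k]
  calc ∑' k, F k * F (k + 1) * w k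
      ≤ ∑' k, (a k * F k ^ 2 + c (k + 1) * F (k + 1) ^ 2) :=
        hs'.tsum_le_tsum (fun k => mul_mul_le_add_of_sq_le (ha k) (hc _) (hw k) _ _)
          (hsa.add ((summable_nat_add_iff 1).mpr hsc))
    _ = ∑' k, (a k * F k ^ 2 + c k * F k ^ 2) := by
        rw [hsa.tsum_add ((summable_nat_add_iff 1).mpr hsc),
          tsum_add_one_eq_tsum (g := fun k => c k * F k ^ 2) (by simp [hc0]),
          ← hsa.tsum_add hsc]
    _ ≤ ∑' k, M * (F k ^ 2 * w k) :=
        (hsa.add hsc).tsum_le_tsum (fun k => by nlinarith [hac k, sq_nonneg (F k)])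
          (hs.mul_left M)
    _ = M * ∑' k, F k ^ 2 * w k := tsum_mul_left

abbrev bergmanWeight : ℕ → ℝ := fun k => ((k : ℝ) + 1)⁻¹

lemma bergmanWeight_pos (k : ℕ) : 0 < bergmanWeight k := by positivity

lemma bergmanWeight_antitone : Antitone bergmanWeight := fun i j hij =>
  inv_anti₀ (by positivity) (by gcongr)

lemma bergmanWeight_succ (k : ℕ) : bergmanWeight (k + 1) = ((k : ℝ) + 2)⁻¹ := by
  simp only [bergmanWeight]
  push_cast
  ring_nf

lemma bergman_tsum_mul_succ_le (F : ℕ → ℝ)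
    (hs : Summable fun k => F k ^ 2 * bergmanWeight (k + 1))
    (hs' : Summable fun k => F k * F (k + 1) * bergmanWeight (k + 1)) :
    ∑' k, F k * F (k + 1) * bergmanWeight (k + 1)
      ≤ 3 * √2 / 4 * ∑' k, F k ^ 2 * bergmanWeight (k + 1) := by
  have h2 : √2 ^ 2 = 2 := Real.sq_sqrt zero_le_two
  refine tsum_mul_succ_le_of_sq_le (a := fun k => √2 * ((k : ℝ) + 3) / (4 * ((k + 1) * (k + 2))))
    (c := fun k => √2 * k / (2 * ((k + 1) * (k + 2)))) (fun k => by positivity)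
    (fun k => by positivity) (by simp) (fun k => ?_) (fun k => ?_) hs hs'
  · rw [bergmanWeight_succ]
    push_cast
    field_simp
    ring_nf
    rw [h2]
    nlinarith [sq_nonneg (k : ℝ)]
  · rw [bergmanWeight_succ]
    field_simp
    ring_nf
    nlinarith

lemma hasSum_quadratic_mul_half_pow :
    HasSum (fun k : ℕ => ((k : ℝ) + 1) * ((k : ℝ) + 2) * (1 / 2) ^ k) 16 := by
  have h := (hasSum_choose_mul_geometric_of_norm_lt_one 2
    (by norm_num : ‖(1 / 2 : ℝ)‖ < 1)).mul_left 2
  rw [show (16 : ℝ) = 2 * (1 / (1 - 1 / 2) ^ (2 + 1)) by norm_num]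
  refine h.congr_fun fun k => ?_
  rw [Nat.cast_choose_two]
  push_cast
  ring

lemma hasSum_cubic_mul_half_pow :
    HasSum (fun k : ℕ => ((k : ℝ) + 1) * ((k : ℝ) + 2) * ((k : ℝ) + 3) * (1 / 2) ^ k) 96 := by
  have h := (hasSum_choose_mul_geometric_of_norm_lt_one 3
    (by norm_num : ‖(1 / 2 : ℝ)‖ < 1)).mul_left 6
  rw [show (96 : ℝ) = 6 * (1 / (1 - 1 / 2) ^ (3 + 1)) by norm_num]
  refine h.congr_fun fun k => ?_
  rw [← Nat.choose_symm_add, Nat.cast_add_choose]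
  push_cast [Nat.factorial_succ]
  field_simp
  ring

def extremalCoeff (k : ℕ) : ℝ := ((k : ℝ) + 1) * ((k : ℝ) + 2) / 2 * (1 / √2) ^ k

/-- The Taylor coefficients of `(1 - z / √2)⁻³`. -/
def extremalSeq : ℕ → ℂ := fun k => (((k : ℂ) + 1) * ((k : ℂ) + 2) / 2) * (1 / (√2 : ℂ)) ^ k

lemma extremalSeq_eq_ofReal : extremalSeq = fun k => (extremalCoeff k : ℂ) := by
  funext k
  simp only [extremalSeq, extremalCoeff]
  push_cast
  ring

lemma one_div_sqrt_two_pow_sq (k : ℕ) : ((1 / √2) ^ k) ^ 2 = (1 / 2 : ℝ) ^ k := by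
  rw [← pow_mul, mul_comm, pow_mul, div_pow, one_pow, Real.sq_sqrt zero_le_two]

lemma hasSum_extremalCoeff_mul_self :
    HasSum (fun k => extremalCoeff k * extremalCoeff k * bergmanWeight k) 20 := by
  have h := (hasSum_cubic_mul_half_pow.sub hasSum_quadratic_mul_half_pow).mul_left (1 / 4)
  rw [show (20 : ℝ) = 1 / 4 * (96 - 16) by norm_num]
  refine h.congr_fun fun k => ?_
  simp only [extremalCoeff, bergmanWeight]
  rw [← one_div_sqrt_two_pow_sq]
  field_simp
  ring

lemma hasSum_extremalCoeff_mul_self_succ :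
    HasSum (fun k => extremalCoeff k * extremalCoeff k * bergmanWeight (k + 1)) 16 := by
  have h := (hasSum_cubic_mul_half_pow.sub
    (hasSum_quadratic_mul_half_pow.mul_left 2)).mul_left (1 / 4)
  rw [show (16 : ℝ) = 1 / 4 * (96 - 2 * 16) by norm_num]
  refine h.congr_fun fun k => ?_
  simp only [extremalCoeff, bergmanWeight_succ]
  rw [← one_div_sqrt_two_pow_sq]
  field_simp
  ring

lemma hasSum_extremalCoeff_mul_succ :
    HasSum (fun k => extremalCoeff k * extremalCoeff (k + 1) * bergmanWeight (k + 1))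
      (12 * √2) := by
  have h := hasSum_cubic_mul_half_pow.mul_left (√2 / 8)
  rw [show 12 * √2 = √2 / 8 * 96 by ring]
  refine h.congr_fun fun k => ?_
  simp only [extremalCoeff, bergmanWeight_succ]
  rw [← one_div_sqrt_two_pow_sq, pow_succ, ← Real.sqrt_div_self']
  generalize (√2 / 2) ^ k = x
  push_cast
  field_simp
  ring

lemma wInner_ofReal {ω : ℕ → ℝ} (r s : ℕ → ℝ) :
    wInner ω (fun k => (r k : ℂ)) (fun k => (s k : ℂ)) = ((∑' k, r k * s k * ω k : ℝ) : ℂ) := by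
  rw [wInner, Complex.ofReal_tsum]
  exact tsum_congr fun k => by rw [Complex.conj_ofReal]; push_cast; ring

lemma shiftSeq_ofReal (r : ℕ → ℝ) :
    shiftSeq (fun k => (r k : ℂ)) = fun k => ((shiftSeq r k : ℝ) : ℂ) := by
  funext k
  cases k <;> simp

lemma extremalSeq_zero : extremalSeq 0 = 1 := by
  simp [extremalSeq]

lemma memHw_extremalSeq : MemHw bergmanWeight extremalSeq := by
  refine hasSum_extremalCoeff_mul_self.summable.congr fun k => ?_
  rw [extremalSeq_eq_ofReal, Complex.norm_real, Real.norm_eq_abs, sq_abs, sq]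

lemma wInner_extremalSeq_self : wInner bergmanWeight extremalSeq extremalSeq = 20 := by
  rw [extremalSeq_eq_ofReal, wInner_ofReal, hasSum_extremalCoeff_mul_self.tsum_eq]
  norm_num

lemma wInner_extremalSeq_shiftSeq :
    wInner bergmanWeight extremalSeq (shiftSeq extremalSeq) = (12 * √2 : ℝ) := by
  rw [extremalSeq_eq_ofReal, shiftSeq_ofReal, wInner_ofReal, ← tsum_add_one_eq_tsum (by simp),
    ← hasSum_extremalCoeff_mul_succ.tsum_eq]
  exact congrArg _ (tsum_congr fun k => by simp only [shiftSeq_succ]; ring)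

lemma wInner_shiftSeq_extremalSeq_shiftSeq :
    wInner bergmanWeight (shiftSeq extremalSeq) (shiftSeq extremalSeq) = 16 := by
  rw [extremalSeq_eq_ofReal, shiftSeq_ofReal, wInner_ofReal, ← tsum_add_one_eq_tsum (by simp)]
  exact_mod_cast hasSum_extremalCoeff_mul_self_succ.tsum_eq

lemma wInner_shiftSeq_extremalSeq :
    wInner bergmanWeight (shiftSeq extremalSeq) extremalSeq = (12 * √2 : ℝ) := by
  rw [extremalSeq_eq_ofReal, shiftSeq_ofReal, wInner_ofReal, ← tsum_add_one_eq_tsum (by simp),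
    ← hasSum_extremalCoeff_mul_succ.tsum_eq]
  rfl

def extremalZero : ℂ := ((2 * √2 / 3 : ℝ) : ℂ)

/-- Solving the normal equations for `n = 1` with the Gram entries `20`, `12√2`, `16`. -/
def extremalApproximant : ℂ[X] := C ((-(3 * √2 / 8) : ℝ) : ℂ) * (X - C extremalZero)

lemma isOPA_extremalApproximant : IsOPA bergmanWeight extremalSeq 1 extremalApproximant := by
  have hω : ∀ k, 0 ≤ bergmanWeight k := fun k => (bergmanWeight_pos k).le
  have hf := memHw_extremalSeq
  have hSf := memHw_shiftSeq hω bergmanWeight_antitone hf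
  have hu := memHw_sub hω (memHw_polyMulSeq hω bergmanWeight_antitone extremalApproximant hf)
    memHw_oneSeq
  have horth : ∀ g, MemHw bergmanWeight g →
      wInner bergmanWeight g (polyMulSeq extremalApproximant extremalSeq - oneSeq)
        = -(3 * √2 / 8) * (wInner bergmanWeight g (shiftSeq extremalSeq)
          - 2 * √2 / 3 * wInner bergmanWeight g extremalSeq) - g 0 := by
    intro g hg
    have hz := memHw_smul extremalZero hf
    rw [extremalApproximant, polyMulSeq_C_mul, polyMulSeq_sub, polyMulSeq_X, polyMulSeq_C,
      wInner_sub_right hω hg (memHw_smul _ (memHw_sub hω hSf hz)) memHw_oneSeq,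
      wInner_smul_right, wInner_sub_right hω hg hSf hz, wInner_smul_right, wInner_oneSeq,
      extremalZero, Complex.conj_ofReal, Complex.conj_ofReal]
    simp
  refine isOPA_of_wInner_eq_zero hω bergmanWeight_antitone hf
    ((natDegree_C_mul_le _ _).trans (natDegree_X_sub_C _).le) fun r hr => ?_
  rw [eq_X_add_C_of_natDegree_le_one hr, polyMulSeq_add, polyMulSeq_C_mul, polyMulSeq_X,
    polyMulSeq_C, wInner_add_left hω (memHw_smul _ hSf) (memHw_smul _ hf) hu, wInner_smul_left,
    wInner_smul_left, horth _ hSf, horth _ hf, wInner_shiftSeq_extremalSeq_shiftSeq,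
    wInner_shiftSeq_extremalSeq, wInner_extremalSeq_shiftSeq, wInner_extremalSeq_self]
  have h2 : (√2 : ℂ) * √2 = 2 := by exact_mod_cast Real.mul_self_sqrt zero_le_two
  rw [shiftSeq_zero, extremalSeq_zero]
  push_cast
  linear_combination (3 * r.coeff 1 * √2 + r.coeff 0 / 2) * h2

lemma two_sqrt_two_div_three_le_norm_of_isOPA_eval_eq_zero {f : ℕ → ℂ} {n : ℕ} {q : ℂ[X]}
    {z : ℂ} (hf : MemHw bergmanWeight f) (hf0 : f 0 ≠ 0) (hq : IsOPA bergmanWeight f n q)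
    (hz : q.eval z = 0) : 2 * √2 / 3 ≤ ‖z‖ := by
  have h := one_le_norm_mul_of_isOPA_eval_eq_zero bergmanWeight_pos bergmanWeight_antitone hf
    bergman_tsum_mul_succ_le hq hf0 hz
  have h2 : √2 * √2 = 2 := Real.mul_self_sqrt zero_le_two
  nlinarith [Real.sqrt_nonneg 2, norm_nonneg z]

lemma extremalApproximant_eval_extremalZero : extremalApproximant.eval extremalZero = 0 := by
  simp [extremalApproximant]

lemma norm_extremalZero : ‖extremalZero‖ = 2 * √2 / 3 := by
  rw [extremalZero, Complex.norm_real, Real.norm_of_nonneg (by positivity)]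

def opaZeroModuli (ω : ℕ → ℝ) : Set ℝ :=
  {r : ℝ | ∃ (f : ℕ → ℂ) (n : ℕ) (q : ℂ[X]) (z : ℂ),
    MemHw ω f ∧ f ≠ 0 ∧ f 0 ≠ 0 ∧ IsOPA ω f n q ∧ q.eval z = 0 ∧ ‖z‖ = r}

lemma isLeast_opaZeroModuli_bergmanWeight :
    IsLeast (opaZeroModuli bergmanWeight) (2 * √2 / 3) := by
  have hf0 : extremalSeq 0 ≠ 0 := by rw [extremalSeq_zero]; exact one_ne_zero
  refine ⟨⟨extremalSeq, 1, extremalApproximant, extremalZero, memHw_extremalSeq,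
    fun h => hf0 (congrFun h 0), hf0, isOPA_extremalApproximant,
    extremalApproximant_eval_extremalZero, norm_extremalZero⟩, ?_⟩
  rintro r ⟨f, n, q, z, hf, -, hf0, hq, hz, rfl⟩
  exact two_sqrt_two_div_three_le_norm_of_isOPA_eval_eq_zero hf hf0 hq hz

/-- In the Bergman space A² (ω_k = 1/(k+1)), some opa has a zero strictly inside the
disk; the minimal modulus of such a zero is 2√2/3, attained by f(z) = (1 - z/√2)^{-3}. -/
theorem stmt_13 :
    (∃ r ∈ {r : ℝ | ∃ (f : ℕ → ℂ) (n : ℕ) (q : Polynomial ℂ) (z : ℂ),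
        MemHw (fun k => ((k : ℝ) + 1)⁻¹) f ∧ f ≠ 0 ∧ f 0 ≠ 0 ∧
        IsOPA (fun k => ((k : ℝ) + 1)⁻¹) f n q ∧ q.eval z = 0 ∧ ‖z‖ = r},
      r < 1) ∧
    IsLeast {r : ℝ | ∃ (f : ℕ → ℂ) (n : ℕ) (q : Polynomial ℂ) (z : ℂ),
        MemHw (fun k => ((k : ℝ) + 1)⁻¹) f ∧ f ≠ 0 ∧ f 0 ≠ 0 ∧
        IsOPA (fun k => ((k : ℝ) + 1)⁻¹) f n q ∧ q.eval z = 0 ∧ ‖z‖ = r}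
      (2 * Real.sqrt 2 / 3) ∧
    (∃ (n : ℕ) (q : Polynomial ℂ) (z : ℂ),
      IsOPA (fun k => ((k : ℝ) + 1)⁻¹)
        (fun k => (((k : ℂ) + 1) * ((k : ℂ) + 2) / 2) * (1 / (Real.sqrt 2 : ℂ)) ^ k) n q ∧
      q.eval z = 0 ∧ ‖z‖ = 2 * Real.sqrt 2 / 3) := by
  have hleast := isLeast_opaZeroModuli_bergmanWeight
  have hlt : 2 * √2 / 3 < 1 := by
    nlinarith [Real.mul_self_sqrt (zero_le_two : (0 : ℝ) ≤ 2), Real.sqrt_nonneg 2]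
  exact ⟨⟨_, hleast.1, hlt⟩, hleast, 1, extremalApproximant, extremalZero,
    isOPA_extremalApproximant, extremalApproximant_eval_extremalZero, norm_extremalZero⟩
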